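/- arXiv:math/0511543 — 2 statements merged into one kernel-verified Lean document; each statement's English description precedes it below -/
import Mathlib

section
/- Let d ≥ 1, G ≥ 0, k ≥ 1 be integers with 2d ≥ 2G - 2 + k, and suppose r_0, n_0, n_b, n_r are nonnegative integers and ν_1,...,ν_{l_0} integers with ν_i ≥ 2, satisfying: n_0 + n_b = 2(d + G - 1), k ≥ d·r_0 - n_0, n_r ≤ n_b, and d·l_0 - n_r ≤ Σ_{i=1}^{l_0} d/ν_i. Then ν_g := r_0 + Σ_{i=1}^{l_0} (1 - 1/ν_i) satisfies ν_g ≤ 2 + (2G - 2 + k)/d ≤ 4. -/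
/-!
Multiply by `d`: `d·ν_g = d·r₀ + (d·l₀ - ∑ d/νᵢ) ≤ (k + n₀) + n_r ≤ k + n₀ + n_b`, and by
Riemann–Hurwitz the right side is `k + 2(d + G - 1)`. The bound `≤ 4` is `2G - 2 + k ≤ 2d`.
-/

open Finset

lemma mul_sum_one_sub_one_div {K ι : Type*} [Field K] (s : Finset ι) (d : K) (ν : ι → K) :
    d * ∑ i ∈ s, (1 - 1 / ν i) = d * #s - ∑ i ∈ s, d / ν i := by
  simp only [mul_sum, mul_sub, mul_one, mul_one_div, sum_sub_distrib, sum_const, nsmul_eq_mul]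

lemma le_add_div_iff_mul_le {K : Type*} [Field K] [LinearOrder K] [IsStrictOrderedRing K]
    {d : K} (hd : 0 < d) (x a b : K) : x ≤ a + b / d ↔ d * x ≤ d * a + b := by
  rw [← mul_le_mul_iff_right₀ hd, mul_add, mul_div_cancel₀ b hd.ne']

theorem stmt_3_general (d G k : ℤ) (hd : 1 ≤ d)
    (hdeg : 2 * d ≥ 2 * G - 2 + k)
    (r₀ n₀ n_b n_r : ℤ)
    (l₀ : ℕ) (ν : Fin l₀ → ℤ)
    (hRH : n₀ + n_b = 2 * (d + G - 1))
    (hk' : k ≥ d * r₀ - n₀)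
    (hrb : n_r ≤ n_b)
    (hcount : (d : ℚ) * l₀ - n_r ≤ ∑ i, (d : ℚ) / (ν i : ℚ)) :
    (r₀ : ℚ) + ∑ i, (1 - 1 / (ν i : ℚ)) ≤ 2 + ((2 * G - 2 + k : ℤ) : ℚ) / (d : ℚ) ∧
    (2 : ℚ) + ((2 * G - 2 + k : ℤ) : ℚ) / (d : ℚ) ≤ 4 := by
  have hd₀ : (0 : ℚ) < d := by exact_mod_cast hd.trans_lt' one_pos
  have hRH' : (n₀ : ℚ) + n_b = 2 * (d + G - 1) := by exact_mod_cast hRH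
  have hk'' : (d : ℚ) * r₀ - n₀ ≤ k := by exact_mod_cast hk'
  have hrb' : (n_r : ℚ) ≤ n_b := by exact_mod_cast hrb
  have hdeg' : (2 * G - 2 + k : ℚ) ≤ 2 * d := by exact_mod_cast hdeg
  have hdefect := mul_sum_one_sub_one_div univ (d : ℚ) (fun i ↦ (ν i : ℚ))
  rw [card_univ, Fintype.card_fin] at hdefect
  push_cast
  constructor
  · rw [le_add_div_iff_mul_le hd₀, mul_add, hdefect]
    linarith
  · rw [← le_sub_iff_add_le', div_le_iff₀ hd₀]
    linarith

/-- the totally ramified value number bound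
ν_g = r₀ + Σ (1 - 1/ν_i) ≤ 2 + (2G - 2 + k)/d ≤ 4. -/
theorem stmt_3 (d G k : ℤ) (hd : 1 ≤ d) (hG : 0 ≤ G) (hk : 1 ≤ k)
    (hdeg : 2 * d ≥ 2 * G - 2 + k)
    (r₀ n₀ n_b n_r : ℤ) (hr₀ : 0 ≤ r₀) (hn₀ : 0 ≤ n₀) (hnb : 0 ≤ n_b) (hnr : 0 ≤ n_r)
    (l₀ : ℕ) (ν : Fin l₀ → ℤ) (hν : ∀ i, 2 ≤ ν i)
    (hRH : n₀ + n_b = 2 * (d + G - 1))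
    (hk' : k ≥ d * r₀ - n₀)
    (hrb : n_r ≤ n_b)
    (hcount : (d : ℚ) * l₀ - n_r ≤ ∑ i, (d : ℚ) / (ν i : ℚ)) :
    (r₀ : ℚ) + ∑ i, (1 - 1 / (ν i : ℚ)) ≤ 2 + ((2 * G - 2 + k : ℤ) : ℚ) / (d : ℚ) ∧
    (2 : ℚ) + ((2 * G - 2 + k : ℤ) : ℚ) / (d : ℚ) ≤ 4 :=
  stmt_3_general d G k hd hdeg r₀ n₀ n_b n_r l₀ ν hRH hk' hrb hcount
end

section
/- Let G = 0, k ≥ 1, d ≥ 1 be integers with 2d = Σ_{j=1}^k μ_j - 2, where all μ_j ≥ 2 (so 2d ≥ 2k - 2). Then no integer r_0 ≥ 3 satisfies r_0 ≤ 2 + (2G - 2 + k)/d = 2 + (k - 2)/d. Hence for G = 0 the number of exceptional values satisfies D_g ≤ 2. -/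
/-- genus zero case. With G = 0, μ_j ≥ 2 and 2d = Σ μ_j - 2,
no integer r₀ ≥ 3 can satisfy r₀ ≤ 2 + (k - 2)/d; hence D_g ≤ 2 for any
number of exceptional values D_g satisfying the bound. -/
theorem stmt_5 (d : ℤ) (k : ℕ) (hd : 1 ≤ d) (hk : 1 ≤ k)
    (μ : Fin k → ℤ) (hμ : ∀ j, 2 ≤ μ j)
    (hRR : 2 * d = (∑ j, μ j) - 2) :
    (∀ r₀ : ℤ, 3 ≤ r₀ → ¬ ((r₀ : ℚ) ≤ 2 + ((k : ℚ) - 2) / (d : ℚ))) ∧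
    (∀ D_g : ℤ, 0 ≤ D_g → (D_g : ℚ) ≤ 2 + ((k : ℚ) - 2) / (d : ℚ) → D_g ≤ 2) := by
  have hsum : 2 * (k : ℤ) ≤ ∑ j, μ j := by
    calc 2 * (k : ℤ) = ∑ _j : Fin k, (2 : ℤ) := by simp [mul_comm]
    _ ≤ ∑ j, μ j := Finset.sum_le_sum fun j _ => hμ j
  have hdk : (k : ℤ) - 1 ≤ d := by omega
  have hdQ : (0 : ℚ) < (d : ℚ) := by exact_mod_cast hd
  have key : 2 + ((k : ℚ) - 2) / (d : ℚ) < 3 := by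
    have h1 : ((k : ℚ) - 2) / (d : ℚ) < 1 := by
      rw [div_lt_one hdQ]
      have : ((k : ℚ) - 1) ≤ (d : ℚ) := by exact_mod_cast hdk
      linarith
    linarith
  constructor
  · intro r₀ hr hle
    have : (3 : ℚ) ≤ (r₀ : ℚ) := by exact_mod_cast hr
    linarith
  · intro D_g _ hle
    have : (D_g : ℚ) < 3 := lt_of_le_of_lt hle key
    have : D_g < 3 := by exact_mod_cast this
    omega
end
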